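/- A linear subspace X of c₀(ω₁) is separable if and only if there exists a countable ordinal α such that every f ∈ X satisfies f(β) = 0 for all ordinals β with α < β < ω₁. -/

import Mathlib

set_option synthInstance.maxHeartbeats 1000000
set_option maxHeartbeats 2000000

noncomputable section
open Set Ordinal

/-- `ω₁`, the first uncountable ordinal. -/
abbrev omega1 : Ordinal.{0} := Ordinal.omega 1

/-- Every ordinal interval `[0, o]` is a compact space in its (inherited) order topology. -/
instance (o : Ordinal) : CompactSpace (Set.Iic o) := by
  have h : IsCompact (Set.Iic o) := by
    have := isCompact_Icc (a := (⊥ : Ordinal)) (b := o)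
    rwa [Set.Icc_bot] at this
  exact isCompact_iff_compactSpace.mp h

/-- The Banach space `C([0, ω₁])` of continuous real-valued functions on `[0, ω₁]`,
with the supremum norm. -/
abbrev CC := C(Set.Iic omega1, ℝ)

/-- Type synonym endowing an arbitrary type with the discrete topology. -/
def DiscType (Γ : Type*) : Type _ := Γ
instance (Γ : Type*) : TopologicalSpace (DiscType Γ) := ⊥
instance (Γ : Type*) : DiscreteTopology (DiscType Γ) := ⟨rfl⟩

/-- `c₀(Γ)`: the Banach space of real-valued functions on `Γ` vanishing at infinity,
i.e. `{γ : |f γ| ≥ ε}` is finite for every `ε > 0`, with the supremum norm. -/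
abbrev czero (Γ : Type*) := ZeroAtInftyContinuousMap (DiscType Γ) ℝ

/-- The set `[0, ω₁)` of countable ordinals, the index set of `c₀(ω₁)`. -/
abbrev Gamma1 : Type 1 := {α : Ordinal.{0} // α < omega1}

/-!
Every `f ∈ c₀(Γ)` has countable support, and evaluation at a point is continuous. So if `X` has a
countable dense subset `c`, every `f ∈ X` vanishes off the countable union of the supports of the
elements of `c`, and a countable set of countable ordinals is bounded below `ω₁`. Conversely, the
functions supported in a countable set `S` lie in the closure of the span of the countably many
unit vectors `e_s`, `s ∈ S`: truncating `f` to the finite set `{|f| ≥ ε}` is an `ε`-approximation.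
-/

open Filter Topology TopologicalSpace Function

section CZero

variable {Γ : Type*}

lemma czero_tendsto_cofinite (f : czero Γ) : Tendsto f cofinite (𝓝 0) := by
  simpa only [cocompact_eq_cofinite] using zero_at_infty f

lemma czero_finite_setOf_le_norm (f : czero Γ) {ε : ℝ} (hε : 0 < ε) :
    {x | ε ≤ ‖f x‖}.Finite := by
  simpa only [dist_zero_right, not_lt] using
    eventually_cofinite.1 (Metric.tendsto_nhds.1 (czero_tendsto_cofinite f) ε hε)

lemma czero_support_countable (f : czero Γ) : (support f).Countable := by
  have := (czero_tendsto_cofinite f).countable_compl_preimage_ker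
  rwa [ker_nhds] at this

lemma czero_continuous_apply (x : DiscType Γ) : Continuous fun f : czero Γ => f x :=
  (continuous_eval_const (F := BoundedContinuousFunction (DiscType Γ) ℝ) x).comp
    ZeroAtInftyContinuousMap.isometry_toBCF.continuous

lemma czero_dist_le {f g : czero Γ} {C : ℝ} (hC : 0 ≤ C) (h : ∀ x, dist (f x) (g x) ≤ C) :
    dist f g ≤ C :=
  (BoundedContinuousFunction.dist_le (f := f.toBCF) (g := g.toBCF) hC).mpr h

def czeroSingle (x : DiscType Γ) : czero Γ where
  toFun := Set.indicator {x} 1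
  continuous_toFun := continuous_of_discreteTopology
  zero_at_infty' := by
    rw [cocompact_eq_cofinite]
    refine tendsto_const_nhds.congr' ?_
    filter_upwards [(Set.finite_singleton x).compl_mem_cofinite] with y hy
    exact (Set.indicator_of_notMem hy _).symm

lemma czeroSingle_apply (x y : DiscType Γ) : czeroSingle x y = Set.indicator {x} 1 y := rfl

lemma czero_sum_apply {ι : Type*} (s : Finset ι) (g : ι → czero Γ) (y : DiscType Γ) :
    (∑ i ∈ s, g i) y = ∑ i ∈ s, g i y :=
  map_sum (AddMonoidHom.mk' (fun g : czero Γ => g y) fun _ _ => rfl) g s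

lemma czero_sum_smul_single_apply (s : Finset (DiscType Γ)) (f : czero Γ) (y : DiscType Γ) :
    (∑ x ∈ s, f x • czeroSingle x) y = Set.indicator s f y := by
  classical
  simp [czero_sum_apply, czeroSingle_apply, Set.indicator_apply]

lemma mem_closure_span_czeroSingle {S : Set (DiscType Γ)} {f : czero Γ} (hf : support f ⊆ S) :
    f ∈ closure (Submodule.span ℝ (czeroSingle '' S) : Set (czero Γ)) := by
  refine Metric.mem_closure_iff.2 fun ε hε => ?_
  set K := {x | ε / 2 ≤ ‖f x‖}
  have hK : K.Finite := czero_finite_setOf_le_norm f (half_pos hε)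
  have hKS : K ⊆ S := fun x hx => hf (norm_pos_iff.1 ((half_pos hε).trans_le hx))
  refine ⟨∑ x ∈ hK.toFinset, f x • czeroSingle x,
    Submodule.sum_mem _ fun x hx => Submodule.smul_mem _ _
      (Submodule.subset_span ⟨x, hKS (hK.mem_toFinset.1 hx), rfl⟩), ?_⟩
  calc dist f _ ≤ ε / 2 := czero_dist_le (half_pos hε).le fun y => by
        rw [czero_sum_smul_single_apply, hK.coe_toFinset]
        by_cases hy : y ∈ K
        · rw [Set.indicator_of_mem hy, dist_self]
          exact (half_pos hε).le
        · rw [Set.indicator_of_notMem hy, dist_zero_right]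
          exact (not_le.1 hy).le
    _ < ε := half_lt_self hε

theorem isSeparable_setOf_support_subset {S : Set (DiscType Γ)} (hS : S.Countable) :
    IsSeparable {f : czero Γ | support f ⊆ S} :=
  ((hS.image czeroSingle).isSeparable.span (R := ℝ)).closure.mono
    fun _ => mem_closure_span_czeroSingle

theorem exists_countable_support_subset_of_isSeparable {s : Set (czero Γ)} (hs : IsSeparable s) :
    ∃ S : Set (DiscType Γ), S.Countable ∧ ∀ f ∈ s, support f ⊆ S := by
  obtain ⟨c, hc, hsc⟩ := hs
  refine ⟨⋃ d ∈ c, support d, hc.biUnion fun d _ => czero_support_countable d,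
    fun f hf x hx => ?_⟩
  by_contra hxS
  have hclosed : IsClosed {g : czero Γ | g x = 0} :=
    isClosed_eq (czero_continuous_apply x) continuous_const
  have hc0 : c ⊆ {g | g x = 0} := fun d hd =>
    notMem_support.1 fun h => hxS (Set.mem_biUnion hd h)
  exact hx (hclosed.closure_subset_iff.2 hc0 (hsc hf))

end CZero

lemma countable_Iic_of_lt_omega1 {α : Ordinal.{0}} (hα : α < omega1) : (Iic α).Countable := by
  rw [← Iio_insert]
  refine Countable.insert α (Cardinal.le_aleph0_iff_set_countable.1 ?_)
  rw [Cardinal.mk_Iio_ordinal, Cardinal.lift_le_aleph0, ← Cardinal.lt_aleph_one_iff,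
    ← Cardinal.lt_omega_iff_card_lt]
  exact hα

lemma exists_lt_omega1_forall_le {S : Set Gamma1} (hS : S.Countable) :
    ∃ α < omega1, ∀ γ ∈ S, γ.1 ≤ α := by
  have := hS.to_subtype
  exact ⟨⨆ γ : S, γ.1.1, Ordinal.iSup_lt_omega_one fun γ => γ.1.2,
    fun γ hγ => Ordinal.le_iSup (fun γ : S => γ.1.1) ⟨γ, hγ⟩⟩

/-- A linear subspace `X` of `c₀(ω₁)` is separable if and only if there is a countable ordinal
`α` such that every `f ∈ X` vanishes at every ordinal `β` with `α < β < ω₁`. -/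
theorem subspace_of_c0omega1_separable_iff (X : Submodule ℝ (czero Gamma1)) :
    TopologicalSpace.IsSeparable (X : Set (czero Gamma1)) ↔
      ∃ α < omega1, ∀ f ∈ X, ∀ β : DiscType Gamma1, α < β.1 → f β = 0 := by
  constructor
  · intro hX
    obtain ⟨S, hS, hXS⟩ := exists_countable_support_subset_of_isSeparable hX
    obtain ⟨α, hα, hSα⟩ := exists_lt_omega1_forall_le hS
    exact ⟨α, hα, fun f hf β hβ =>
      notMem_support.1 fun hβS => (hSα β (hXS f hf hβS)).not_gt hβ⟩
  · rintro ⟨α, hα, hX⟩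
    have hS : {γ : DiscType Gamma1 | γ.1 ≤ α}.Countable :=
      (countable_Iic_of_lt_omega1 hα).preimage Subtype.val_injective
    exact (isSeparable_setOf_support_subset hS).mono fun f hf β hβ =>
      not_lt.1 fun hαβ => hβ (hX f hf β hαβ)
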